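/- (Theorem 2) Let G := -F be the backward-time vector field of ẋ = F(x, w), and suppose G is mixed-monotone with respect to a decomposition function D. If x̲ ⪯ x̄ in ℝⁿ satisfy 0 ⪯_SE E(x̲, x̄), i.e., D(x̲, w̲, x̄, w̄) ⪰ 0 and D(x̄, w̄, x̲, w̲) ⪯ 0 componentwise, then the complement ℝⁿ \ [x̲, x̄] is robustly forward invariant for ẋ = F(x, w): every solution x of ẋ = F(x, w(t)) under any piecewise continuous disturbance w valued in 𝒲 with x(0) ∉ [x̲, x̄] satisfies x(t) ∉ [x̲, x̄] for all t ≥ 0 in its interval of existence. -/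

import Mathlib

/-!
If a solution entered the box `[x̲, x̄]` at time `t₁`, consider the squared distance `φ(t)` from
`x(t)` to the box. Its derivative is `2 ∑ eᵢ Fᵢ(x, w)`, where `e = x - π x` is the displacement
from the nearest point `π x` of the box. Mixed monotonicity of `G = -F` together with
`0 ⪯_SE E(x̲, x̄)` makes `F` point out of the box on its faces, i.e. `eᵢ Fᵢ(π x, w) ≥ 0`; since
`F` is Lipschitz in the state on a compact set containing the trajectory and the box, this gives
`φ' ≥ -c φ`. Hence `φ(0) ≤ exp (c t₁) φ(t₁) = 0`, so `x(0)` already lay in the box.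
-/

open Set Function Filter Topology

/-- A function is piecewise continuous on a set `s` if it is continuous on `s` off of
finitely many points. -/
def PiecewiseContinuousOn {α : Type*} [TopologicalSpace α] (w : ℝ → α) (s : Set ℝ) : Prop :=
  ∃ E : Finset ℝ, ContinuousOn w (s \ (E : Set ℝ))

/-- `d` is a decomposition function for the vector field `F` on state space `ℝⁿ` with
disturbance set `𝒲 = Set.Icc wl wu ⊆ ℝᵐ`:  `d` is locally Lipschitz, agrees with `F` on the
diagonal, `dᵢ` is nondecreasing in `xⱼ` for `j ≠ i`, nonincreasing in every component of `x̂`,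
nondecreasing in every component of `w` and nonincreasing in every component of `ŵ`. -/
def IsDecompositionFunction {n m : ℕ} (wl wu : Fin m → ℝ)
    (F : (Fin n → ℝ) → (Fin m → ℝ) → (Fin n → ℝ))
    (d : (Fin n → ℝ) → (Fin m → ℝ) → (Fin n → ℝ) → (Fin m → ℝ) → (Fin n → ℝ)) : Prop :=
  LocallyLipschitz
      (fun p : ((Fin n → ℝ) × (Fin m → ℝ)) × ((Fin n → ℝ) × (Fin m → ℝ)) =>
        d p.1.1 p.1.2 p.2.1 p.2.2)
    ∧ (∀ x : Fin n → ℝ, ∀ w ∈ Set.Icc wl wu, d x w x w = F x w)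
    ∧ (∀ (i j : Fin n), j ≠ i → ∀ (x xh : Fin n → ℝ) (s t : ℝ), s ≤ t →
        ∀ w ∈ Set.Icc wl wu, ∀ wh ∈ Set.Icc wl wu,
          d (Function.update x j s) w xh wh i ≤ d (Function.update x j t) w xh wh i)
    ∧ (∀ (i j : Fin n) (x xh : Fin n → ℝ) (s t : ℝ), s ≤ t →
        ∀ w ∈ Set.Icc wl wu, ∀ wh ∈ Set.Icc wl wu,
          d x w (Function.update xh j t) wh i ≤ d x w (Function.update xh j s) wh i)
    ∧ (∀ (i : Fin n) (k : Fin m) (x xh : Fin n → ℝ) (s t : ℝ),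
        wl k ≤ s → s ≤ t → t ≤ wu k →
        ∀ w ∈ Set.Icc wl wu, ∀ wh ∈ Set.Icc wl wu,
          d x (Function.update w k s) xh wh i ≤ d x (Function.update w k t) xh wh i)
    ∧ (∀ (i : Fin n) (k : Fin m) (x xh : Fin n → ℝ) (s t : ℝ),
        wl k ≤ s → s ≤ t → t ≤ wu k →
        ∀ w ∈ Set.Icc wl wu, ∀ wh ∈ Set.Icc wl wu,
          d x w xh (Function.update wh k t) i ≤ d x w xh (Function.update wh k s) i)

open Real

lemma hasDerivAt_sq_max_zero (s : ℝ) :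
    HasDerivAt (fun r : ℝ => max r 0 ^ 2) (2 * max s 0) s := by
  refine hasDerivAt_of_hasDerivAt_of_ne' (g := fun s => 2 * max s 0) (x := 0)
    (fun y hy => ?_) (by fun_prop) (by fun_prop) s
  rcases hy.lt_or_gt with hy | hy
  · have h : (fun r : ℝ => max r 0 ^ 2) =ᶠ[𝓝 y] fun _ => 0 := by
      filter_upwards [eventually_lt_nhds hy] with r hr
      simp [hr.le]
    simpa [hy.le] using (hasDerivAt_const y (0 : ℝ)).congr_of_eventuallyEq h
  · have h : (fun r : ℝ => max r 0 ^ 2) =ᶠ[𝓝 y] fun r => r ^ 2 := by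
      filter_upwards [eventually_gt_nhds hy] with r hr
      simp [hr.le]
    simpa [hy.le] using (hasDerivAt_pow 2 y).congr_of_eventuallyEq h

lemma le_exp_mul_mul_of_neg_mul_le_deriv {φ φ' : ℝ → ℝ} {a b c : ℝ} (hab : a ≤ b)
    (hφ : ∀ t ∈ Icc a b, HasDerivAt φ (φ' t) t) (hbound : ∀ t ∈ Icc a b, -c * φ t ≤ φ' t) :
    φ a ≤ exp (c * (b - a)) * φ b := by
  have hderiv : ∀ t ∈ Icc a b,
      HasDerivAt (fun t => exp (c * t) * φ t) (exp (c * t) * (c * φ t + φ' t)) t :=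
    fun t ht => (((hasDerivAt_id' t).const_mul c).exp.mul (hφ t ht)).congr_deriv (by ring)
  have hmono : MonotoneOn (fun t => exp (c * t) * φ t) (Icc a b) :=
    monotoneOn_of_hasDerivWithinAt_nonneg (convex_Icc a b)
      (fun t ht => (hderiv t ht).continuousAt.continuousWithinAt)
      (fun t ht => (hderiv t (interior_subset ht)).hasDerivWithinAt)
      (fun t ht => mul_nonneg (exp_pos _).le (by linarith [hbound t (interior_subset ht)]))
  have hab' := hmono (left_mem_Icc.2 hab) (right_mem_Icc.2 hab) hab
  rw [mul_sub, exp_sub, div_mul_eq_mul_div, le_div_iff₀ (exp_pos _)]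
  simpa only [mul_comm] using hab'

lemma le_of_forall_update_le {ι α β : Type*} [Fintype ι] [DecidableEq ι] [PartialOrder α]
    [Preorder β] {f : (ι → α) → β} {a b : ι → α} (hab : a ≤ b)
    (hf : ∀ j, a j < b j → ∀ y ∈ Icc a b, ∀ s ∈ Icc (a j) (b j), ∀ t ∈ Icc (a j) (b j),
      s ≤ t → f (update y j s) ≤ f (update y j t)) :
    f a ≤ f b := by
  suffices ∀ S : Finset ι, f a ≤ f (S.piecewise b a) by simpa using this Finset.univ
  intro S
  induction S using Finset.induction_on with
  | empty => simp
  | insert j S hjS ih =>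
    refine ih.trans ?_
    set y := S.piecewise b a
    have hy : update y j (a j) = y :=
      update_eq_self_iff.2 (Finset.piecewise_eq_of_notMem _ _ _ hjS).symm
    rw [Finset.piecewise_insert]
    nth_rw 1 [← hy]
    rcases (hab j).lt_or_eq with hlt | heq
    · exact hf j hlt y (S.piecewise_mem_Icc' hab) _ (left_mem_Icc.2 (hab j)) _
        (right_mem_Icc.2 (hab j)) (hab j)
    · rw [heq]

variable {ι : Type*}

/-- `y` minus its nearest point in the box `Icc lo hi` (when `lo ≤ hi`). -/
def boxDisplacement (lo hi y : ι → ℝ) : ι → ℝ :=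
  fun i => max (y i - hi i) 0 - max (lo i - y i) 0

variable {lo hi : ι → ℝ}

lemma sub_boxDisplacement_mem_Icc (h : lo ≤ hi) (y : ι → ℝ) :
    y - boxDisplacement lo hi y ∈ Icc lo hi := by
  constructor <;> intro i <;> have := h i <;> simp only [boxDisplacement, Pi.sub_apply] <;>
    rcases max_cases (y i - hi i) 0 with ⟨h1, _⟩ | ⟨h1, _⟩ <;>
    rcases max_cases (lo i - y i) 0 with ⟨h2, _⟩ | ⟨h2, _⟩ <;> rw [h1, h2] <;> linarith

lemma sub_boxDisplacement_apply_of_pos (h : lo ≤ hi) {y : ι → ℝ} {i : ι}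
    (hi' : 0 < boxDisplacement lo hi y i) : (y - boxDisplacement lo hi y) i = hi i := by
  have := h i
  simp only [boxDisplacement, Pi.sub_apply] at hi' ⊢
  rcases max_cases (y i - hi i) 0 with ⟨h1, _⟩ | ⟨h1, _⟩ <;>
    rcases max_cases (lo i - y i) 0 with ⟨h2, _⟩ | ⟨h2, _⟩ <;> rw [h1, h2] at hi' ⊢ <;> linarith

lemma sub_boxDisplacement_apply_of_neg (h : lo ≤ hi) {y : ι → ℝ} {i : ι}
    (hi' : boxDisplacement lo hi y i < 0) : (y - boxDisplacement lo hi y) i = lo i := by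
  have := h i
  simp only [boxDisplacement, Pi.sub_apply] at hi' ⊢
  rcases max_cases (y i - hi i) 0 with ⟨h1, _⟩ | ⟨h1, _⟩ <;>
    rcases max_cases (lo i - y i) 0 with ⟨h2, _⟩ | ⟨h2, _⟩ <;> rw [h1, h2] at hi' ⊢ <;> linarith

variable [Fintype ι]

/-- The squared Euclidean distance from `y` to the box `Icc lo hi`. -/
def boxSqDist (lo hi y : ι → ℝ) : ℝ :=
  ∑ i, (max (y i - hi i) 0 ^ 2 + max (lo i - y i) 0 ^ 2)

lemma boxSqDist_nonneg (lo hi y : ι → ℝ) : 0 ≤ boxSqDist lo hi y :=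
  Finset.sum_nonneg fun _ _ => by positivity

lemma boxSqDist_eq_zero_iff {y : ι → ℝ} : boxSqDist lo hi y = 0 ↔ y ∈ Icc lo hi := by
  rw [boxSqDist, Finset.sum_eq_zero_iff_of_nonneg fun _ _ => by positivity]
  simp [add_eq_zero_iff_of_nonneg, Pi.le_def, forall_and, and_comm]

lemma sq_norm_boxDisplacement_le (y : ι → ℝ) :
    ‖boxDisplacement lo hi y‖ ^ 2 ≤ boxSqDist lo hi y := by
  have hcoord : ∀ i, boxDisplacement lo hi y i ^ 2 ≤ boxSqDist lo hi y := fun i =>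
    calc boxDisplacement lo hi y i ^ 2 ≤ max (y i - hi i) 0 ^ 2 + max (lo i - y i) 0 ^ 2 := by
          simp only [boxDisplacement]
          nlinarith [le_max_right (y i - hi i) 0, le_max_right (lo i - y i) 0]
      _ ≤ boxSqDist lo hi y := Finset.single_le_sum (f := fun i => max (y i - hi i) 0 ^ 2
          + max (lo i - y i) 0 ^ 2) (fun _ _ => by positivity) (Finset.mem_univ i)
  have hnorm : ‖boxDisplacement lo hi y‖ ≤ √(boxSqDist lo hi y) :=
    (pi_norm_le_iff_of_nonneg (sqrt_nonneg _)).2 fun i =>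
      le_sqrt_of_sq_le (by rw [Real.norm_eq_abs, sq_abs]; exact hcoord i)
  calc ‖boxDisplacement lo hi y‖ ^ 2 ≤ √(boxSqDist lo hi y) ^ 2 := by gcongr
    _ = boxSqDist lo hi y := sq_sqrt (boxSqDist_nonneg lo hi y)

lemma HasDerivAt.boxSqDist {x : ℝ → ι → ℝ} {x' : ι → ℝ} {t : ℝ} (hx : HasDerivAt x x' t) :
    HasDerivAt (fun t => boxSqDist lo hi (x t))
      (2 * ∑ i, boxDisplacement lo hi (x t) i * x' i) t := by
  have hcoord : ∀ i ∈ Finset.univ, HasDerivAt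
      (fun t => max (x t i - hi i) 0 ^ 2 + max (lo i - x t i) 0 ^ 2)
      (2 * max (x t i - hi i) 0 * x' i + 2 * max (lo i - x t i) 0 * -x' i) t := fun i _ =>
    have hxi := hasDerivAt_pi.1 hx i
    ((hasDerivAt_sq_max_zero _).comp t (hxi.sub_const _)).add
      ((hasDerivAt_sq_max_zero _).comp t (hxi.const_sub _))
  refine (HasDerivAt.fun_sum hcoord).congr_deriv ?_
  rw [Finset.mul_sum]
  exact Finset.sum_congr rfl fun i _ => by simp only [boxDisplacement]; ring

lemma neg_mul_sq_norm_le_sum_mul {e v v₀ : ι → ℝ} {L : ℝ}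
    (hv : ‖v - v₀‖ ≤ L * ‖e‖) (hv₀ : ∀ i, 0 ≤ e i * v₀ i) :
    -(Fintype.card ι * L) * ‖e‖ ^ 2 ≤ ∑ i, e i * v i := by
  have hterm : ∀ i, -(L * ‖e‖ ^ 2) ≤ e i * v i := fun i => by
    have he : |e i| ≤ ‖e‖ := norm_le_pi_norm e i
    have hvi : |v i - v₀ i| ≤ L * ‖e‖ := (norm_le_pi_norm (v - v₀) i).trans hv
    have hprod : |e i * (v i - v₀ i)| ≤ ‖e‖ * (L * ‖e‖) := by
      rw [abs_mul]; exact mul_le_mul he hvi (abs_nonneg _) (norm_nonneg _)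
    nlinarith [neg_abs_le (e i * (v i - v₀ i)), hv₀ i]
  calc -(Fintype.card ι * L) * ‖e‖ ^ 2 = ∑ _i : ι, -(L * ‖e‖ ^ 2) := by
        rw [Finset.sum_const, Finset.card_univ, nsmul_eq_mul]; ring
    _ ≤ ∑ i, e i * v i := Finset.sum_le_sum fun i _ => hterm i

lemma neg_mul_boxSqDist_le_sum_mul {y v v₀ : ι → ℝ} {L : ℝ} (hL : 0 ≤ L)
    (hv : ‖v - v₀‖ ≤ L * ‖boxDisplacement lo hi y‖)
    (hv₀ : ∀ i, 0 ≤ boxDisplacement lo hi y i * v₀ i) :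
    -(Fintype.card ι * L) * boxSqDist lo hi y ≤ ∑ i, boxDisplacement lo hi y i * v i :=
  calc -(Fintype.card ι * L) * boxSqDist lo hi y
      ≤ -(Fintype.card ι * L) * ‖boxDisplacement lo hi y‖ ^ 2 :=
        mul_le_mul_of_nonpos_left (sq_norm_boxDisplacement_le y)
          (neg_nonpos.2 (by positivity))
    _ ≤ ∑ i, boxDisplacement lo hi y i * v i := neg_mul_sq_norm_le_sum_mul hv hv₀

namespace IsDecompositionFunction

variable {n m : ℕ} {wl wu : Fin m → ℝ} {G : (Fin n → ℝ) → (Fin m → ℝ) → (Fin n → ℝ)}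
  {D : (Fin n → ℝ) → (Fin m → ℝ) → (Fin n → ℝ) → (Fin m → ℝ) → (Fin n → ℝ)}

lemma apply_le_apply (hD : IsDecompositionFunction wl wu G D) {i : Fin n}
    {x x' xh xh' : Fin n → ℝ} {w w' wh wh' : Fin m → ℝ}
    (hx : x ≤ x') (hxi : x i = x' i) (hxh : xh' ≤ xh)
    (hwl : wl ≤ w) (hw : w ≤ w') (hwu : w' ≤ wu)
    (hwhl : wl ≤ wh') (hwh : wh' ≤ wh) (hwhu : wh ≤ wu) :
    D x w xh wh i ≤ D x' w' xh' wh' i := by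
  have hwhmem : wh ∈ Icc wl wu := ⟨hwhl.trans hwh, hwhu⟩
  have hw'mem : w' ∈ Icc wl wu := ⟨hwl.trans hw, hwu⟩
  calc D x w xh wh i
      ≤ D x' w xh wh i :=
        le_of_forall_update_le (f := fun y => D y w xh wh i) hx
          fun j hj y _ s _ t _ hst => hD.2.2.1 i j (fun h => hj.ne (h ▸ hxi)) y xh s t hst
            w ⟨hwl, hw.trans hwu⟩ wh hwhmem
    _ ≤ D x' w xh' wh i :=
        le_of_forall_update_le (f := fun y => OrderDual.toDual (D x' w y wh i)) hxh
          fun j _ y _ s _ t _ hst => hD.2.2.2.1 i j x' y s t hst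
            w ⟨hwl, hw.trans hwu⟩ wh hwhmem
    _ ≤ D x' w' xh' wh i :=
        le_of_forall_update_le (f := fun u => D x' u xh' wh i) hw
          fun j _ u hu s hs t ht hst => hD.2.2.2.2.1 i j x' xh' s t (hwl j |>.trans hs.1) hst
            (ht.2.trans (hwu j)) u ⟨hwl.trans hu.1, hu.2.trans hwu⟩ wh hwhmem
    _ ≤ D x' w' xh' wh' i :=
        le_of_forall_update_le (f := fun u => OrderDual.toDual (D x' w' xh' u i)) hwh
          fun j _ u hu s hs t ht hst => hD.2.2.2.2.2 i j x' xh' s t (hwhl j |>.trans hs.1) hst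
            (ht.2.trans (hwhu j)) w' hw'mem u ⟨hwhl.trans hu.1, hu.2.trans hwhu⟩

variable {xlo xhi : Fin n → ℝ}

lemma apply_le_of_apply_eq_upper (hD : IsDecompositionFunction wl wu G D) {z : Fin n → ℝ}
    (hz : z ∈ Icc xlo xhi) {i : Fin n} (hzi : z i = xhi i) {ω : Fin m → ℝ}
    (hω : ω ∈ Icc wl wu) : G z ω i ≤ D xhi wu xlo wl i := by
  rw [← hD.2.1 z ω hω]
  exact hD.apply_le_apply hz.2 hzi hz.1 hω.1 hω.2 le_rfl le_rfl hω.1 hω.2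

lemma le_apply_of_apply_eq_lower (hD : IsDecompositionFunction wl wu G D) {z : Fin n → ℝ}
    (hz : z ∈ Icc xlo xhi) {i : Fin n} (hzi : z i = xlo i) {ω : Fin m → ℝ}
    (hω : ω ∈ Icc wl wu) : D xlo wl xhi wu i ≤ G z ω i := by
  rw [← hD.2.1 z ω hω]
  exact hD.apply_le_apply hz.1 hzi.symm hz.2 le_rfl hω.1 hω.2 hω.1 hω.2 le_rfl

/-- `0 ⪯_SE E(xlo, xhi)` makes `G` point into the box at the projection of any point onto it. -/
lemma boxDisplacement_mul_apply_nonpos (hD : IsDecompositionFunction wl wu G D)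
    (hlo : 0 ≤ D xlo wl xhi wu) (hhi : D xhi wu xlo wl ≤ 0) (hlohi : xlo ≤ xhi)
    (y : Fin n → ℝ) {ω : Fin m → ℝ} (hω : ω ∈ Icc wl wu) (i : Fin n) :
    boxDisplacement xlo xhi y i * G (y - boxDisplacement xlo xhi y) ω i ≤ 0 := by
  have hz := sub_boxDisplacement_mem_Icc hlohi y
  rcases lt_trichotomy (boxDisplacement xlo xhi y i) 0 with hneg | hzero | hpos
  · exact mul_nonpos_of_nonpos_of_nonneg hneg.le <| (hlo i).trans <|
      hD.le_apply_of_apply_eq_lower hz (sub_boxDisplacement_apply_of_neg hlohi hneg) hω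
  · rw [hzero, zero_mul]
  · exact mul_nonpos_of_nonneg_of_nonpos hpos.le <| (hhi i).trans' <|
      hD.apply_le_of_apply_eq_upper hz (sub_boxDisplacement_apply_of_pos hlohi hpos) hω

lemma exists_lipschitz (hD : IsDecompositionFunction wl wu G D) {K : Set (Fin n → ℝ)}
    (hK : IsCompact K) :
    ∃ L : NNReal, ∀ y ∈ K, ∀ z ∈ K, ∀ ω ∈ Icc wl wu, dist (G y ω) (G z ω) ≤ L * dist y z := by
  have hdiag : LocallyLipschitz fun p : (Fin n → ℝ) × (Fin m → ℝ) => D p.1 p.2 p.1 p.2 :=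
    hD.1.comp (LocallyLipschitz.id.prodMk LocallyLipschitz.id)
  obtain ⟨L, hL⟩ := hdiag.locallyLipschitzOn.exists_lipschitzOnWith_of_compact
    (hK.prod (isCompact_Icc (a := wl) (b := wu)))
  refine ⟨L, fun y hy z hz ω hω => ?_⟩
  have := hL.dist_le_mul (y, ω) ⟨hy, hω⟩ (z, ω) ⟨hz, hω⟩
  rwa [hD.2.1 y ω hω, hD.2.1 z ω hω, Prod.dist_eq, dist_self, max_eq_left dist_nonneg] at this

end IsDecompositionFunction

theorem thm2_complement_forward_invariant_general
    {n m : ℕ} (wl wu : Fin m → ℝ)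
    (F : (Fin n → ℝ) → (Fin m → ℝ) → (Fin n → ℝ))
    (D : (Fin n → ℝ) → (Fin m → ℝ) → (Fin n → ℝ) → (Fin m → ℝ) → (Fin n → ℝ))
    -- D is a decomposition function for the backward-time vector field G = -F
    (hD : IsDecompositionFunction wl wu (fun x w => -(F x w)) D)
    (xlo xhi : Fin n → ℝ)
    -- 0 ⪯_SE E(x̲, x̄)
    (hSE : (0 : Fin n → ℝ) ≤ D xlo wl xhi wu ∧ D xhi wu xlo wl ≤ (0 : Fin n → ℝ)) :
    ∀ T : ℝ, 0 ≤ T →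
      ∀ (x : ℝ → (Fin n → ℝ)) (w : ℝ → (Fin m → ℝ)),
        (∀ t ∈ Set.Icc (0:ℝ) T, w t ∈ Set.Icc wl wu) →
        PiecewiseContinuousOn w (Set.Icc 0 T) →
        (∀ t ∈ Set.Icc (0:ℝ) T, HasDerivAt x (F (x t) (w t)) t) →
        x 0 ∉ Set.Icc xlo xhi →
        ∀ t ∈ Set.Icc (0:ℝ) T, x t ∉ Set.Icc xlo xhi := by
  intro T _ x w hw _ hx hx₀ t₁ ht₁ hxt₁
  have hlohi : xlo ≤ xhi := hxt₁.1.trans hxt₁.2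
  have hsub : Icc 0 t₁ ⊆ Icc 0 T := Icc_subset_Icc_right ht₁.2
  obtain ⟨L, hL⟩ := hD.exists_lipschitz ((isCompact_Icc.image_of_continuousOn
    fun t ht => (hx t (hsub ht)).continuousAt.continuousWithinAt).union isCompact_Icc)
  have hbound : ∀ t ∈ Icc 0 t₁, -(2 * (n * L)) * boxSqDist xlo xhi (x t) ≤
      2 * ∑ i, boxDisplacement xlo xhi (x t) i * F (x t) (w t) i := by
    intro t ht
    set e := boxDisplacement xlo xhi (x t)
    have hz : x t - e ∈ Icc xlo xhi := sub_boxDisplacement_mem_Icc hlohi (x t)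
    have hlip : ‖F (x t) (w t) - F (x t - e) (w t)‖ ≤ L * ‖e‖ := by
      have := hL (x t) (.inl (mem_image_of_mem x ht)) (x t - e) (.inr hz) (w t) (hw t (hsub ht))
      rwa [dist_neg_neg, dist_eq_norm, dist_eq_norm, sub_sub_cancel] at this
    have houtward : ∀ i, 0 ≤ e i * F (x t - e) (w t) i := fun i => by
      have := hD.boxDisplacement_mul_apply_nonpos hSE.1 hSE.2 hlohi (x t) (hw t (hsub ht)) i
      rwa [Pi.neg_apply, mul_neg, neg_nonpos] at this
    have := neg_mul_boxSqDist_le_sum_mul L.coe_nonneg hlip houtward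
    rw [Fintype.card_fin] at this
    linarith
  have hφ₀ := le_exp_mul_mul_of_neg_mul_le_deriv ht₁.1
    (fun t ht => (hx t (hsub ht)).boxSqDist) hbound
  rw [boxSqDist_eq_zero_iff.2 hxt₁, mul_zero] at hφ₀
  exact hx₀ (boxSqDist_eq_zero_iff.1 (hφ₀.antisymm (boxSqDist_nonneg _ _ _)))

/-- Theorem 2: if the backward-time vector field `G = -F` is mixed-monotone
with respect to `D` and `x̲ ⪯ x̄` satisfy `0 ⪯_SE E(x̲, x̄)`, then the complement
`ℝⁿ \ [x̲, x̄]` is robustly forward invariant for `ẋ = F(x, w)`. -/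
theorem thm2_complement_forward_invariant
    {n m : ℕ} (wl wu : Fin m → ℝ) (hwlu : wl ≤ wu)
    (F : (Fin n → ℝ) → (Fin m → ℝ) → (Fin n → ℝ))
    (D : (Fin n → ℝ) → (Fin m → ℝ) → (Fin n → ℝ) → (Fin m → ℝ) → (Fin n → ℝ))
    -- D is a decomposition function for the backward-time vector field G = -F
    (hD : IsDecompositionFunction wl wu (fun x w => -(F x w)) D)
    (xlo xhi : Fin n → ℝ) (hx : xlo ≤ xhi)
    -- 0 ⪯_SE E(x̲, x̄)
    (hSE : (0 : Fin n → ℝ) ≤ D xlo wl xhi wu ∧ D xhi wu xlo wl ≤ (0 : Fin n → ℝ)) :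
    ∀ T : ℝ, 0 ≤ T →
      ∀ (x : ℝ → (Fin n → ℝ)) (w : ℝ → (Fin m → ℝ)),
        (∀ t ∈ Set.Icc (0:ℝ) T, w t ∈ Set.Icc wl wu) →
        PiecewiseContinuousOn w (Set.Icc 0 T) →
        (∀ t ∈ Set.Icc (0:ℝ) T, HasDerivAt x (F (x t) (w t)) t) →
        x 0 ∉ Set.Icc xlo xhi →
        ∀ t ∈ Set.Icc (0:ℝ) T, x t ∉ Set.Icc xlo xhi :=
  thm2_complement_forward_invariant_general wl wu F D hD xlo xhi hSE
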